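/- arXiv:0904.2018 — 4 statements merged into one kernel-verified Lean document; each statement's English description precedes it below -/
import Mathlib

section
/- For any sum Z = X_1 + ... + X_n of (possibly dependent) nonnegative real random variables, the complementary CDF of Z satisfies F̄_Z(z) ≤ (F̄_{X_1} ⊗ ... ⊗ F̄_{X_n})(z) for all z ≥ 0, where ⊗ denotes min-plus convolution: (f ⊗ g)(z) = inf_{0 ≤ y ≤ z} [f(y) + g(z−y)] (the right-hand side may exceed 1, in which case the bound is trivial). -/
open MeasureTheory

/-- Min-plus convolution of `n` functions: infimum over all nonnegative
decompositions `z = y 1 + ... + y n` of the sum of the values. -/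
noncomputable def minplusN (n : ℕ) (f : Fin n → ℝ → ℝ) (z : ℝ) : ℝ :=
  ⨅ y : {y : Fin n → ℝ // (∀ i, 0 ≤ y i) ∧ ∑ i, y i = z},
    ∑ i, f i (y.1 i)

/-- Complementary CDF of a random variable `X` under `P`. -/
noncomputable def ccdf {Ω : Type*} [MeasurableSpace Ω] (P : Measure Ω)
    (X : Ω → ℝ) (z : ℝ) : ℝ := (P {ω | X ω > z}).toReal

/-! If `∑ i, y i ≤ z`, then `∑ i, X i > z` forces `X i > y i` for some `i`, so the union bound
gives `F̄_Z(z) ≤ ∑ i, F̄_{X i}(y i)` without any independence; taking the infimum over the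
decompositions `y` of `z` gives the min-plus bound. -/

lemma ccdf_nonneg {Ω : Type*} [MeasurableSpace Ω] (P : Measure Ω) (X : Ω → ℝ) (z : ℝ) :
    0 ≤ ccdf P X z :=
  ENNReal.toReal_nonneg

lemma minplusN_nonneg {n : ℕ} {f : Fin n → ℝ → ℝ} (hf : ∀ i x, 0 ≤ f i x) (z : ℝ) :
    0 ≤ minplusN n f z :=
  Real.iInf_nonneg fun y => Finset.sum_nonneg fun i _ => hf i (y.1 i)

lemma exists_nonneg_sum_eq {n : ℕ} (hn : n ≠ 0) {z : ℝ} (hz : 0 ≤ z) :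
    ∃ y : Fin n → ℝ, (∀ i, 0 ≤ y i) ∧ ∑ i, y i = z :=
  ⟨fun _ => z / n, fun _ => by positivity, by
    simp [Finset.sum_const, mul_div_cancel₀ z (Nat.cast_ne_zero.mpr hn)]⟩

lemma setOf_sum_gt_subset_iUnion {Ω ι : Type*} [Fintype ι] (X : ι → Ω → ℝ) {y : ι → ℝ}
    {z : ℝ} (hy : ∑ i, y i ≤ z) :
    {ω | ∑ i, X i ω > z} ⊆ ⋃ i, {ω | X i ω > y i} := by
  intro ω hω
  by_contra hnot
  simp only [Set.mem_iUnion, Set.mem_ofPred_eq, not_exists, not_lt] at hω hnot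
  exact (Finset.sum_le_sum fun i _ => hnot i).trans hy |>.not_gt hω

lemma ccdf_sum_le_sum_ccdf {Ω ι : Type*} [MeasurableSpace Ω] [Fintype ι] (P : Measure Ω)
    [IsFiniteMeasure P] (X : ι → Ω → ℝ) {y : ι → ℝ} {z : ℝ} (hy : ∑ i, y i ≤ z) :
    ccdf P (fun ω => ∑ i, X i ω) z ≤ ∑ i, ccdf P (X i) (y i) := by
  have hunion : P {ω | ∑ i, X i ω > z} ≤ ∑ i, P {ω | X i ω > y i} :=
    (measure_mono (setOf_sum_gt_subset_iUnion X hy)).trans (measure_iUnion_fintype_le _ _)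
  calc ccdf P (fun ω => ∑ i, X i ω) z ≤ (∑ i, P {ω | X i ω > y i}).toReal :=
        ENNReal.toReal_mono (ENNReal.sum_ne_top.mpr fun i _ => measure_ne_top P _) hunion
    _ = ∑ i, ccdf P (X i) (y i) := ENNReal.toReal_sum fun i _ => measure_ne_top P _

theorem stmt_0_general {Ω : Type*} [MeasurableSpace Ω] (P : Measure Ω)
    [IsProbabilityMeasure P] (n : ℕ) (X : Fin n → Ω → ℝ)
    (Z : Ω → ℝ) (hZ : Z = fun ω => ∑ i, X i ω) :
    ∀ z : ℝ, 0 ≤ z → ccdf P Z z ≤ minplusN n (fun i => ccdf P (X i)) z := by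
  intro z hz
  subst hZ
  rcases eq_or_ne n 0 with rfl | hn
  · have hZ_zero : ccdf P (fun ω => ∑ i : Fin 0, X i ω) z = 0 := by
      simp [ccdf, hz.not_gt]
    exact hZ_zero ▸ minplusN_nonneg (fun i => ccdf_nonneg P (X i)) z
  · obtain ⟨y, hy_nonneg, hy_sum⟩ := exists_nonneg_sum_eq hn hz
    have : Nonempty {y : Fin n → ℝ // (∀ i, 0 ≤ y i) ∧ ∑ i, y i = z} :=
      ⟨⟨y, hy_nonneg, hy_sum⟩⟩
    exact le_ciInf fun y => ccdf_sum_le_sum_ccdf P X y.2.2.le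

theorem stmt_0 {Ω : Type*} [MeasurableSpace Ω] (P : Measure Ω)
    [IsProbabilityMeasure P] (n : ℕ) (X : Fin n → Ω → ℝ)
    (hmeas : ∀ i, Measurable (X i)) (hnonneg : ∀ i ω, 0 ≤ X i ω)
    (Z : Ω → ℝ) (hZ : Z = fun ω => ∑ i, X i ω) :
    ∀ z : ℝ, 0 ≤ z → ccdf P Z z ≤ minplusN n (fun i => ccdf P (X i)) z :=
  stmt_0_general P n X Z hZ
end

section
/- Let A : ℝ≥0 → ℝ≥0 be a nonnegative wide-sense increasing function with A(0) = 0, let α be nonnegative wide-sense increasing, and fix x ≥ 0. Then the following are equivalent: (a) for all 0 ≤ s ≤ t, A(t) − A(s) ≤ α(t−s) + x; (b) for all t ≥ 0, A(t) ≤ (A ⊗ α)(t) + x, where (A ⊗ α)(t) = inf_{0 ≤ s ≤ t} [A(s) + α(t−s)]. -/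
open Set

/- Needed because `⨅` over an unbounded-below family of reals is the junk value `0`. -/
theorem bddBelow_range_minPlusConv {A α : ℝ → ℝ} (hA : ∀ t, 0 ≤ t → 0 ≤ A t)
    (hα : ∀ t, 0 ≤ t → 0 ≤ α t) (t : ℝ) :
    BddBelow (range fun s : Icc (0 : ℝ) t => A s.1 + α (t - s.1)) := by
  refine ⟨0, ?_⟩
  rintro _ ⟨⟨s, hs0, hst⟩, rfl⟩
  exact add_nonneg (hA s hs0) (hα (t - s) (sub_nonneg.2 hst))

theorem le_minPlusConv_add_iff {A α : ℝ → ℝ} (hA : ∀ t, 0 ≤ t → 0 ≤ A t)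
    (hα : ∀ t, 0 ≤ t → 0 ≤ α t) {t : ℝ} (ht : 0 ≤ t) (x : ℝ) :
    A t ≤ (⨅ s : Icc (0 : ℝ) t, (A s.1 + α (t - s.1))) + x ↔
      ∀ s ∈ Icc (0 : ℝ) t, A t - A s ≤ α (t - s) + x := by
  have : Nonempty (Icc (0 : ℝ) t) := ⟨⟨0, le_rfl, ht⟩⟩
  rw [← sub_le_iff_le_add, le_ciInf_iff (bddBelow_range_minPlusConv hA hα t), Subtype.forall]
  refine forall₂_congr fun s _ => ?_
  constructor <;> intro h <;> linarith

theorem stmt_1_general (A α : ℝ → ℝ)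
    (hA_nonneg : ∀ t, 0 ≤ t → 0 ≤ A t)
    (hα_nonneg : ∀ t, 0 ≤ t → 0 ≤ α t)
    (x : ℝ) :
    (∀ s t : ℝ, 0 ≤ s → s ≤ t → A t - A s ≤ α (t - s) + x) ↔
      (∀ t : ℝ, 0 ≤ t →
        A t ≤ (⨅ s : Set.Icc (0 : ℝ) t, (A s.1 + α (t - s.1))) + x) := by
  constructor
  · intro h t ht
    exact (le_minPlusConv_add_iff hA_nonneg hα_nonneg ht x).2 fun s hs => h s t hs.1 hs.2
  · intro h s t hs hst
    have ht := hs.trans hst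
    exact (le_minPlusConv_add_iff hA_nonneg hα_nonneg ht x).1 (h t ht) s ⟨hs, hst⟩

theorem stmt_1 (A α : ℝ → ℝ)
    (hA_mono : ∀ ⦃s t : ℝ⦄, 0 ≤ s → s ≤ t → A s ≤ A t)
    (hA_nonneg : ∀ t, 0 ≤ t → 0 ≤ A t) (hA0 : A 0 = 0)
    (hα_mono : ∀ ⦃s t : ℝ⦄, 0 ≤ s → s ≤ t → α s ≤ α t)
    (hα_nonneg : ∀ t, 0 ≤ t → 0 ≤ α t)
    (x : ℝ) (hx : 0 ≤ x) :
    (∀ s t : ℝ, 0 ≤ s → s ≤ t → A t - A s ≤ α (t - s) + x) ↔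
      (∀ t : ℝ, 0 ≤ t →
        A t ≤ (⨅ s : Set.Icc (0 : ℝ) t, (A s.1 + α (t - s.1))) + x) :=
  stmt_1_general A α hA_nonneg hα_nonneg x
end

section
/- A flow that is GCRA(T, τ)-constrained has a time-domain deterministic arrival curve λ(n) = (T·n − τ)⁺; that is, its packet arrival times satisfy a(n) − a(m) ≥ (T·(n−m) − τ)⁺ for all 0 ≤ m ≤ n. -/
/-- Theoretical arrival time of the GCRA(T,·) algorithm:
`TAT(0) = a(0)`, `TAT(n+1) = max(a(n), TAT(n)) + T`. -/
noncomputable def TAT (a : ℕ → ℝ) (T : ℝ) : ℕ → ℝ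
  | 0 => a 0
  | n + 1 => max (a n) (TAT a T n) + T

/-! Each update of the theoretical arrival time adds `T` to a value that is at least the latest
arrival, so `TAT(n) ≥ a(m) + T (n - m)` for `m < n`. Conformance `a(n) ≥ TAT(n) - τ` turns this
into the arrival-curve bound, and monotonicity of `a` supplies the positive part. -/

namespace TAT

variable (a : ℕ → ℝ) (T : ℝ)

theorem arrival_add_le_succ (n : ℕ) : a n + T ≤ TAT a T (n + 1) :=
  add_le_add_left (le_max_left _ _) T

theorem add_le_succ (n : ℕ) : TAT a T n + T ≤ TAT a T (n + 1) :=
  add_le_add_left (le_max_right _ _) T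

theorem add_mul_sub_le {m n : ℕ} (hmn : m < n) :
    a m + T * ((n : ℝ) - m) ≤ TAT a T n := by
  induction n, hmn using Nat.le_induction with
  | base =>
    have := arrival_add_le_succ a T m
    push_cast
    linarith
  | succ k _ ih =>
    have := add_le_succ a T k
    push_cast
    linarith

end TAT

theorem stmt_6_general (a : ℕ → ℝ) (T τ : ℝ) (hτ : 0 ≤ τ)
    (ha_mono : Monotone a)
    (hconform : ∀ n : ℕ, a n ≥ TAT a T n - τ) :
    ∀ m n : ℕ, m ≤ n → a n - a m ≥ max 0 (T * ((n : ℝ) - (m : ℝ)) - τ) := by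
  intro m n hmn
  refine max_le (sub_nonneg.mpr (ha_mono hmn)) ?_
  rcases hmn.eq_or_lt with rfl | hlt
  · linarith
  · linarith [TAT.add_mul_sub_le a T hlt, hconform n]

theorem stmt_6 (a : ℕ → ℝ) (T τ : ℝ) (hT : 0 < T) (hτ : 0 ≤ τ)
    (ha_mono : Monotone a)
    (hconform : ∀ n : ℕ, a n ≥ TAT a T n - τ) :
    ∀ m n : ℕ, m ≤ n → a n - a m ≥ max 0 (T * ((n : ℝ) - (m : ℝ)) - τ) :=
  stmt_6_general a T τ hτ ha_mono hconform
end

section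
/- Output characterization: Suppose a system provides an i.d stochastic service curve γ ∈ G with bounding function j ∈ Ḡ to an input with v.s.d stochastic arrival curve λ ∈ G with bounding function h ∈ Ḡ. Then the departure process d(n) has an i.a.t stochastic arrival curve (λ ⊘̄ γ)(n−m) with bounding function (j ⊗ h)(x): for all 0 ≤ m ≤ n and x ≥ 0, P{ (λ ⊘̄ γ)(n−m) − [d(n) − d(m)] > x } ≤ (j ⊗ h)(x), where (λ ⊘̄ γ)(k) = inf_{v ≥ 0}[λ(k + v) − γ(v)]. -/
open MeasureTheory

/-- Max-plus convolution of two sequences. -/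
noncomputable def maxplus (f g : ℕ → ℝ) (n : ℕ) : ℝ :=
  (Finset.Iic n).sup' Finset.nonempty_Iic (fun m => f m + g (n - m))

/-- Min-plus convolution of two real functions. -/
noncomputable def minplus (f g : ℝ → ℝ) (z : ℝ) : ℝ :=
  ⨅ y : Set.Icc (0 : ℝ) z, (f y.1 + g (z - y.1))

/-- Max-plus deconvolution of two sequences: `(f ⊘̄ g)(k) = inf_{v ≥ 0}[f(k+v) − g(v)]`. -/
noncomputable def maxdeconv (f g : ℕ → ℝ) (k : ℕ) : ℝ :=
  ⨅ v : ℕ, (f (k + v) - g v)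

/-!
Let `v ≤ m` attain the max-plus convolution `(a ⊗̄ γ)(m) = a(v) + γ(m - v)`. Taking the shift
`m - v` in the deconvolution gives `(λ ⊘̄ γ)(n - m) ≤ λ(n - v) - γ(m - v)`, and since
`a(n) ≤ d(n)` this yields the pathwise bound
`(λ ⊘̄ γ)(n - m) - [d(n) - d(m)] ≤ [d(m) - (a ⊗̄ γ)(m)] + [λ(n - v) - (a(n) - a(v))]`,
whose last term is at most the arrival deficit `sup_{k ≤ n} {λ(n - k) - [a(n) - a(k)]}`.
So exceeding `x` forces the delay term above `y` or the deficit above `x - y`; a union bound and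
an infimum over `y ∈ [0, x]` give the min-plus convolution `j ⊗ h`.
-/

theorem maxdeconv_sub_le_add_sup {a d lam γ : ℕ → ℝ} {m n : ℕ} (hmn : m ≤ n)
    (had : a n ≤ d n) (hbdd : BddBelow (Set.range fun v => lam (n - m + v) - γ v)) :
    maxdeconv lam γ (n - m) - (d n - d m) ≤
      (d m - maxplus a γ m) +
        (Finset.Iic n).sup' Finset.nonempty_Iic (fun k => lam (n - k) - (a n - a k)) := by
  obtain ⟨v, hv, hmax⟩ :=
    Finset.exists_mem_eq_sup' Finset.nonempty_Iic (fun k => a k + γ (m - k))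
  have hvm : v ≤ m := Finset.mem_Iic.mp hv
  have hdeconv : maxdeconv lam γ (n - m) ≤ lam (n - v) - γ (m - v) := by
    have := ciInf_le hbdd (m - v)
    rwa [show n - m + (m - v) = n - v by omega] at this
  have hsup : lam (n - v) - (a n - a v) ≤
      (Finset.Iic n).sup' Finset.nonempty_Iic (fun k => lam (n - k) - (a n - a k)) :=
    Finset.le_sup' (fun k => lam (n - k) - (a n - a k)) (Finset.mem_Iic.mpr (hvm.trans hmn))
  have hmax' : maxplus a γ m = a v + γ (m - v) := hmax
  linarith

/-- When the deconvolution infimum is unbounded it takes the junk value `0`, and the claim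
follows from `d` being nondecreasing. -/
theorem lt_or_lt_of_lt_maxdeconv_sub {a d lam γ : ℕ → ℝ} {m n : ℕ} {x y : ℝ} (hmn : m ≤ n)
    (had : a n ≤ d n) (hd : d m ≤ d n) (hx : 0 ≤ x)
    (hlt : x < maxdeconv lam γ (n - m) - (d n - d m)) :
    y < d m - maxplus a γ m ∨
      x - y < (Finset.Iic n).sup' Finset.nonempty_Iic (fun k => lam (n - k) - (a n - a k)) := by
  by_cases hbdd : BddBelow (Set.range fun v => lam (n - m + v) - γ v)
  · by_contra! hle
    linarith [maxdeconv_sub_le_add_sup hmn had hbdd]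
  · have hzero : maxdeconv lam γ (n - m) = 0 := Real.iInf_of_not_bddBelow hbdd
    linarith

theorem le_minplus {f g : ℝ → ℝ} {c x : ℝ} (hx : 0 ≤ x)
    (hc : ∀ y ∈ Set.Icc 0 x, c ≤ f y + g (x - y)) : c ≤ minplus f g x :=
  have : Nonempty (Set.Icc 0 x) := ⟨⟨0, le_rfl, hx⟩⟩
  le_ciInf fun y => hc y.1 y.2

theorem measureReal_le_add_of_subset_union {α : Type*} [MeasurableSpace α] {μ : Measure α}
    [IsFiniteMeasure μ] {s t u : Set α} (h : s ⊆ t ∪ u) : μ.real s ≤ μ.real t + μ.real u :=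
  (measureReal_mono h).trans (measureReal_union_le t u)

theorem stmt_17_general {Ω : Type*} [MeasurableSpace Ω] (P : Measure Ω)
    [IsProbabilityMeasure P]
    (a d : ℕ → Ω → ℝ)
    (hd_mono : ∀ ω, Monotone fun n => d n ω)
    (had : ∀ n ω, a n ω ≤ d n ω)
    (γ : ℕ → ℝ) (lam : ℕ → ℝ) (j : ℝ → ℝ) (h : ℝ → ℝ)
    (hid : ∀ n : ℕ, ∀ x : ℝ, 0 ≤ x →
      (P {ω | d n ω - maxplus (fun k => a k ω) γ n > x}).toReal ≤ j x)
    (hvsd : ∀ n : ℕ, ∀ x : ℝ, 0 ≤ x →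
      (P {ω | (Finset.Iic n).sup' Finset.nonempty_Iic
          (fun m => lam (n - m) - (a n ω - a m ω)) > x}).toReal ≤ h x) :
    ∀ m n : ℕ, m ≤ n → ∀ x : ℝ, 0 ≤ x →
      (P {ω | maxdeconv lam γ (n - m) - (d n ω - d m ω) > x}).toReal
        ≤ minplus j h x := by
  intro m n hmn x hx
  refine le_minplus hx fun y ⟨hy, hyx⟩ => ?_
  calc (P {ω | maxdeconv lam γ (n - m) - (d n ω - d m ω) > x}).toReal
      ≤ (P {ω | d m ω - maxplus (fun k => a k ω) γ m > y}).toReal +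
          (P {ω | (Finset.Iic n).sup' Finset.nonempty_Iic
            (fun k => lam (n - k) - (a n ω - a k ω)) > x - y}).toReal :=
        measureReal_le_add_of_subset_union fun ω hω =>
          lt_or_lt_of_lt_maxdeconv_sub (a := (a · ω)) (d := (d · ω)) hmn (had n ω)
            (hd_mono ω hmn) hx hω
    _ ≤ j y + h (x - y) := add_le_add (hid m y hy) (hvsd n (x - y) (sub_nonneg.mpr hyx))

theorem stmt_17 {Ω : Type*} [MeasurableSpace Ω] (P : Measure Ω)
    [IsProbabilityMeasure P]
    (a d : ℕ → Ω → ℝ) (ha_meas : ∀ n, Measurable (a n))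
    (hd_meas : ∀ n, Measurable (d n))
    (ha_mono : ∀ ω, Monotone fun n => a n ω)
    (hd_mono : ∀ ω, Monotone fun n => d n ω)
    (had : ∀ n ω, a n ω ≤ d n ω)
    (γ : ℕ → ℝ) (hγ_mono : Monotone γ) (hγ_nonneg : ∀ n, 0 ≤ γ n)
    (lam : ℕ → ℝ) (hlam_mono : Monotone lam) (hlam_nonneg : ∀ n, 0 ≤ lam n)
    (j : ℝ → ℝ) (hj_anti : Antitone j) (hj_nonneg : ∀ x, 0 ≤ j x)
    (h : ℝ → ℝ) (hh_anti : Antitone h) (hh_nonneg : ∀ x, 0 ≤ h x)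
    (hid : ∀ n : ℕ, ∀ x : ℝ, 0 ≤ x →
      (P {ω | d n ω - maxplus (fun k => a k ω) γ n > x}).toReal ≤ j x)
    (hvsd : ∀ n : ℕ, ∀ x : ℝ, 0 ≤ x →
      (P {ω | (Finset.Iic n).sup' Finset.nonempty_Iic
          (fun m => lam (n - m) - (a n ω - a m ω)) > x}).toReal ≤ h x) :
    ∀ m n : ℕ, m ≤ n → ∀ x : ℝ, 0 ≤ x →
      (P {ω | maxdeconv lam γ (n - m) - (d n ω - d m ω) > x}).toReal
        ≤ minplus j h x :=
  stmt_17_general P a d hd_mono had γ lam j h hid hvsd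
end
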